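/- arXiv:math/0505033 — 2 statements merged into one kernel-verified Lean document; each statement's English description precedes it below -/
import Mathlib

section
/- Let r ≥ 1 and n ≥ r + 1 be integers and let X₁,…,Xₙ be i.i.d. real-valued random variables with E[|X₁|^r] < ∞. For 0 ≤ k ≤ r define the statistic T_k = ∑ X_{j₀}^{r−k} X_{j₁} X_{j₂} ⋯ X_{j_k}, where the sum ranges over all injective tuples (j₀, j₁, …, j_k) of indices in {1,…,n}. Then the h-statistic h_r = ∑_{k=0}^{r} C(r,k) ((−1)^k/(n)_{k+1}) T_k satisfies E[h_r] = E[(X₁ − m₁)^r]; that is, h_r is an unbiased estimator of the r-th central moment. -/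
open Finset MeasureTheory ProbabilityTheory

/-!
Expanding `(X₁ - m₁)^r` binomially gives `E[(X₁ - m₁)^r] = ∑ₖ C(r,k) (-1)^k m_{r-k} m₁^k`.
Each summand of `T_k` is indexed by an injective tuple, so its factors are independent and its
expectation is `m_{r-k} m₁^k`; as there are `(n)_{k+1}` injective `(k+1)`-tuples,
`E[T_k] / (n)_{k+1} = m_{r-k} m₁^k` and the two sums agree term by term.
-/

theorem Finset.card_filter_injective {α β : Type*} [Fintype α] [Fintype β] [DecidableEq α]
    [DecidableEq β] :
    #{g : α → β | Function.Injective g} = (Fintype.card β).descFactorial (Fintype.card α) := by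
  rw [← Fintype.card_subtype, Fintype.card_congr (Equiv.subtypeInjectiveEquivEmbedding α β),
    Fintype.card_embedding_eq]

theorem Fin.pow_mul_prod_succ_eq_prod_pow_cons {M : Type*} [CommMonoid M] {k : ℕ}
    (x : Fin (k + 1) → M) (a : ℕ) :
    x 0 ^ a * ∏ s : Fin k, x s.succ
      = ∏ i, x i ^ (Fin.cons a (fun _ ↦ 1) : Fin (k + 1) → ℕ) i := by
  simp [Fin.prod_univ_succ]

namespace MeasureTheory

variable {Ω : Type*} [MeasurableSpace Ω] {μ : Measure Ω}

theorem integrable_pow_of_integrable_abs_pow [IsFiniteMeasure μ] {Y : Ω → ℝ}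
    (hY : AEStronglyMeasurable Y μ) {e r : ℕ} (her : e ≤ r)
    (hint : Integrable (fun ω ↦ |Y ω| ^ r) μ) :
    Integrable (fun ω ↦ Y ω ^ e) μ :=
  (integrable_norm_iff (hY.pow e)).1 <| by
    simpa only [Pi.pow_apply, norm_pow] using integrable_norm_pow_of_le hY her hint

theorem integral_sub_const_pow {Y : Ω → ℝ} {r : ℕ}
    (hY : ∀ e ≤ r, Integrable (fun ω ↦ Y ω ^ e) μ) (c : ℝ) :
    ∫ ω, (Y ω - c) ^ r ∂μ
      = ∑ k ∈ range (r + 1), (r.choose k : ℝ) * (-1) ^ k * ((∫ ω, Y ω ^ (r - k) ∂μ) * c ^ k) := by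
  have hexpand (ω : Ω) : (Y ω - c) ^ r
      = ∑ k ∈ range (r + 1), (r.choose k : ℝ) * (-1) ^ k * c ^ k * Y ω ^ (r - k) := by
    rw [sub_eq_neg_add, add_pow]
    refine sum_congr rfl fun k _ ↦ ?_
    rw [neg_pow]
    ring
  simp_rw [hexpand]
  rw [integral_finsetSum _ fun k _ ↦ (hY _ (Nat.sub_le r k)).const_mul _]
  refine sum_congr rfl fun k _ ↦ ?_
  rw [integral_const_mul]
  ring

end MeasureTheory

namespace ProbabilityTheory

variable {Ω ι : Type*} [MeasurableSpace Ω] {μ : Measure Ω}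

theorem iIndepFun.integrable_finsetProd {f : ι → Ω → ℝ} (hf : iIndepFun f μ)
    (hf_int : ∀ i, Integrable (f i) μ) (s : Finset ι) :
    Integrable (fun ω ↦ ∏ i ∈ s, f i ω) μ := by
  have := hf.isProbabilityMeasure
  classical
  induction s using Finset.cons_induction with
  | empty => simp
  | cons a s ha ih =>
    have hindep : IndepFun (∏ j ∈ s, f j) (f a) μ :=
      hf.indepFun_finsetProd_of_notMem₀ (fun i ↦ (hf_int i).aemeasurable) ha
    rw [Finset.prod_fn] at hindep
    simp_rw [Finset.prod_cons, mul_comm (f a _)]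
    exact hindep.integrable_mul ih (hf_int a)

section IdentDistrib

variable {X : ι → Ω → ℝ} {i₀ : ι}

theorem integral_prod_pow_of_injective (hindep : iIndepFun X μ)
    (hident : ∀ i, IdentDistrib (X i) (X i₀) μ μ) {κ : Type*} [Fintype κ] {g : κ → ι}
    (hg : g.Injective) (e : κ → ℕ) :
    ∫ ω, ∏ j, X (g j) ω ^ e j ∂μ = ∏ j, ∫ ω, X i₀ ω ^ e j ∂μ := by
  rw [(hindep.precomp hg).integral_fun_prod_comp (f := fun j x ↦ x ^ e j)
    (fun j ↦ (hident (g j)).aemeasurable_fst) (fun j ↦ (continuous_pow _).aestronglyMeasurable)]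
  exact prod_congr rfl fun j _ ↦
    ((hident (g j)).comp (measurable_id.pow_const (e j))).integral_eq

theorem integrable_prod_pow_of_injective (hindep : iIndepFun X μ)
    (hident : ∀ i, IdentDistrib (X i) (X i₀) μ μ) {κ : Type*} [Fintype κ] {g : κ → ι}
    (hg : g.Injective) {e : κ → ℕ} (hint : ∀ j, Integrable (fun ω ↦ X i₀ ω ^ e j) μ) :
    Integrable (fun ω ↦ ∏ j, X (g j) ω ^ e j) μ :=
  ((hindep.precomp hg).comp (fun j x ↦ x ^ e j) fun _ ↦ measurable_id.pow_const _)
    |>.integrable_finsetProd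
      (fun j ↦ ((hident (g j)).comp (measurable_id.pow_const (e j))).integrable_iff.2 (hint j)) univ

theorem integral_pow_mul_prod_succ_of_injective (hindep : iIndepFun X μ)
    (hident : ∀ i, IdentDistrib (X i) (X i₀) μ μ) {k : ℕ} {g : Fin (k + 1) → ι}
    (hg : g.Injective) (a : ℕ) :
    ∫ ω, X (g 0) ω ^ a * ∏ s : Fin k, X (g s.succ) ω ∂μ
      = (∫ ω, X i₀ ω ^ a ∂μ) * (∫ ω, X i₀ ω ∂μ) ^ k := by
  have hsummand (ω : Ω) := Fin.pow_mul_prod_succ_eq_prod_pow_cons (fun i ↦ X (g i) ω) a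
  simp_rw [hsummand, integral_prod_pow_of_injective hindep hident hg, Fin.prod_univ_succ]
  simp

theorem integrable_pow_mul_prod_succ_of_injective (hindep : iIndepFun X μ)
    (hident : ∀ i, IdentDistrib (X i) (X i₀) μ μ) {k : ℕ} {g : Fin (k + 1) → ι}
    (hg : g.Injective) {a : ℕ} (ha : Integrable (fun ω ↦ X i₀ ω ^ a) μ)
    (hX : Integrable (X i₀) μ) :
    Integrable (fun ω ↦ X (g 0) ω ^ a * ∏ s : Fin k, X (g s.succ) ω) μ := by
  have hsummand (ω : Ω) := Fin.pow_mul_prod_succ_eq_prod_pow_cons (fun i ↦ X (g i) ω) a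
  simp_rw [hsummand]
  refine integrable_prod_pow_of_injective hindep hident hg fun j ↦ ?_
  cases j using Fin.cases <;> simpa

variable [Fintype ι] [DecidableEq ι]

theorem integrable_sum_injective_pow_mul_prod (hindep : iIndepFun X μ)
    (hident : ∀ i, IdentDistrib (X i) (X i₀) μ μ) {k a : ℕ}
    (ha : Integrable (fun ω ↦ X i₀ ω ^ a) μ) (hX : Integrable (X i₀) μ) :
    Integrable (fun ω ↦ ∑ g ∈ (univ : Finset (Fin (k + 1) → ι)).filter Function.Injective,
      X (g 0) ω ^ a * ∏ s : Fin k, X (g s.succ) ω) μ :=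
  integrable_finsetSum _ fun _ hg ↦
    integrable_pow_mul_prod_succ_of_injective hindep hident (mem_filter.1 hg).2 ha hX

theorem integral_sum_injective_pow_mul_prod (hindep : iIndepFun X μ)
    (hident : ∀ i, IdentDistrib (X i) (X i₀) μ μ) {k a : ℕ}
    (ha : Integrable (fun ω ↦ X i₀ ω ^ a) μ) (hX : Integrable (X i₀) μ) :
    ∫ ω, ∑ g ∈ (univ : Finset (Fin (k + 1) → ι)).filter Function.Injective,
        X (g 0) ω ^ a * ∏ s : Fin k, X (g s.succ) ω ∂μ
      = (Fintype.card ι).descFactorial (k + 1)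
          * ((∫ ω, X i₀ ω ^ a ∂μ) * (∫ ω, X i₀ ω ∂μ) ^ k) := by
  rw [integral_finsetSum _ fun _ hg ↦
      integrable_pow_mul_prod_succ_of_injective hindep hident (mem_filter.1 hg).2 ha hX,
    sum_congr rfl fun _ hg ↦
      integral_pow_mul_prod_succ_of_injective hindep hident (mem_filter.1 hg).2 a,
    sum_const, card_filter_injective, Fintype.card_fin, nsmul_eq_mul]

end IdentDistrib

end ProbabilityTheory

/-- For i.i.d. real random variables `X₁,…,Xₙ` with `E[|X₁|^r] < ∞`, `r ≥ 1`,
`n ≥ r + 1`, let `T_k = ∑ X_{j₀}^{r−k} X_{j₁} ⋯ X_{j_k}` (sum over injective `(k+1)`-tuples of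
indices). Then the `h`-statistic `h_r = ∑_{k=0}^r C(r,k) ((−1)^k/(n)_{k+1}) T_k` satisfies
`E[h_r] = E[(X₁ − m₁)^r]`: it is an unbiased estimator of the `r`-th central moment. -/
theorem hstatistic_unbiased_for_central_moment
    {Ω : Type*} [MeasurableSpace Ω] (μ : Measure Ω) [IsProbabilityMeasure μ]
    (r n : ℕ) (hr : 1 ≤ r) (hn : r + 1 ≤ n)
    (X : Fin n → Ω → ℝ)
    (hindep : iIndepFun X μ)
    (hident : ∀ l, IdentDistrib (X l) (X ⟨0, by omega⟩) μ μ)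
    (hint : Integrable (fun ω => |X ⟨0, by omega⟩ ω| ^ r) μ) :
    ∫ ω, (∑ k ∈ Finset.range (r + 1),
        (r.choose k : ℝ) * ((-1 : ℝ) ^ k / (n.descFactorial (k + 1) : ℝ)) *
          ∑ g ∈ (univ : Finset (Fin (k + 1) → Fin n)).filter Function.Injective,
            X (g 0) ω ^ (r - k) * ∏ s : Fin k, X (g s.succ) ω) ∂μ
      = ∫ ω, (X ⟨0, by omega⟩ ω - ∫ ω', X ⟨0, by omega⟩ ω' ∂μ) ^ r ∂μ := by
  set i₀ : Fin n := ⟨0, by omega⟩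
  have hpow (e : ℕ) (he : e ≤ r) : Integrable (fun ω ↦ X i₀ ω ^ e) μ :=
    integrable_pow_of_integrable_abs_pow (hident i₀).aemeasurable_fst.aestronglyMeasurable he hint
  have hmean : Integrable (X i₀) μ := by simpa using hpow 1 hr
  have hterm (k : ℕ) (hk : k ∈ range (r + 1)) :
      ∫ ω, (r.choose k : ℝ) * ((-1 : ℝ) ^ k / (n.descFactorial (k + 1) : ℝ)) *
          ∑ g ∈ (univ : Finset (Fin (k + 1) → Fin n)).filter Function.Injective,
            X (g 0) ω ^ (r - k) * ∏ s : Fin k, X (g s.succ) ω ∂μ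
        = (r.choose k : ℝ) * (-1) ^ k * ((∫ ω, X i₀ ω ^ (r - k) ∂μ) * (∫ ω, X i₀ ω ∂μ) ^ k) := by
    have hd : (n.descFactorial (k + 1) : ℝ) ≠ 0 := by
      rw [mem_range] at hk
      exact_mod_cast (Nat.descFactorial_pos.2 (by omega)).ne'
    rw [integral_const_mul, integral_sum_injective_pow_mul_prod hindep hident
      (hpow _ (Nat.sub_le r k)) hmean, Fintype.card_fin]
    field_simp
  rw [integral_finsetSum _ fun k _ ↦ (integrable_sum_injective_pow_mul_prod hindep hident
      (hpow _ (Nat.sub_le r k)) hmean).const_mul _,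
    sum_congr rfl hterm, integral_sub_const_pow hpow]
end

section
/- Let n and i be positive integers and let X₁,…,Xₙ be i.i.d. real-valued random variables with E[|X₁|^i] < ∞. Then E[(X₁ + X₂ + ⋯ + Xₙ)^i] = ∑_{π∈Π_i} (n)_{|π|} ∏_{B∈π} m_{|B|}; equivalently, E[(X₁+⋯+Xₙ)^i] = ∑_{k=1}^{i} (n)_k B_{i,k}(m₁, m₂, …, m_{i−k+1}), where B_{i,k} = ∑_{π∈Π_{i,k}} ∏_{B∈π} m_{|B|} is the incomplete exponential Bell polynomial summed over partitions of {1,…,i} into k blocks. -/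
/-!
Expanding `(X₁ + ⋯ + Xₙ)^i` gives a sum over all maps `g : Fin i → Fin n` of `∏ⱼ X_{g j}`.
By independence and identical distribution, the expectation of such a term is `∏_B m_{|B|}`,
the product running over the blocks of the kernel partition of `g`. A map with kernel `π` is the
same as an injection of the blocks of `π` into `Fin n`, so exactly `(n)_{|π|}` maps have kernel `π`.
-/

open Finset MeasureTheory ProbabilityTheory

namespace Finpartition

variable {α β : Type*} [Fintype α] [DecidableEq α]

lemma parts_eq_image_part (P : Finpartition (univ : Finset α)) : P.parts = univ.image P.part := by
  ext B
  simp only [mem_image, mem_univ, true_and]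
  refine ⟨fun hB => ?_, ?_⟩
  · obtain ⟨a, ha⟩ := P.nonempty_of_mem_parts hB
    exact ⟨a, P.part_eq_of_mem hB ha⟩
  · rintro ⟨a, rfl⟩
    exact P.part_mem.2 (mem_univ a)

lemma ext_part {P Q : Finpartition (univ : Finset α)} (h : ∀ a, P.part a = Q.part a) : P = Q :=
  Finpartition.ext <| by rw [parts_eq_image_part, parts_eq_image_part, funext h]

lemma card_parts_mem_Icc [Nonempty α] (P : Finpartition (univ : Finset α)) :
    #P.parts ∈ Icc 1 (Fintype.card α) :=
  mem_Icc.2 ⟨card_pos.2 (P.parts_nonempty univ_nonempty.ne_empty), P.card_parts_le_card⟩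

variable [DecidableEq β]

instance (g : α → β) : DecidableRel (Setoid.ker g) := fun a b => decEq (g a) (g b)

def ker (g : α → β) : Finpartition (univ : Finset α) := ofSetoid (Setoid.ker g)

@[simp]
lemma mem_part_ker {g : α → β} {a b : α} : b ∈ (ker g).part a ↔ g a = g b :=
  mem_part_ofSetoid_iff_rel

lemma part_ker (g : α → β) (a : α) : (ker g).part a = ({b | g b = g a} : Finset α) := by
  ext b; simp [eq_comm]

lemma parts_ker (g : α → β) :
    (ker g).parts = (univ.image g).image (fun v => ({a | g a = v} : Finset α)) := by
  rw [parts_eq_image_part, image_image]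
  exact image_congr fun a _ => part_ker g a

lemma prod_parts_ker [Fintype β] {M : Type*} [CommMonoid M] (f : ℕ → M) (hf : f 0 = 1)
    (g : α → β) : ∏ B ∈ (ker g).parts, f #B = ∏ v, f #{a | g a = v} := by
  rw [parts_ker, prod_image]
  · refine prod_subset (subset_univ _) fun v _ hv => ?_
    have hfiber : ({a | g a = v} : Finset α) = ∅ :=
      filter_false_of_mem fun a _ (hav : g a = v) => hv (hav ▸ mem_image_of_mem g (mem_univ a))
    rw [hfiber, card_empty, hf]
  · intro v hv w _ hvw
    obtain ⟨a, -, rfl⟩ := mem_image.1 hv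
    simpa using (Finset.ext_iff.1 hvw a).1 (by simp)

lemma ker_eq_iff {g : α → β} {π : Finpartition (univ : Finset α)} :
    ker g = π ↔ ∀ a b, g a = g b ↔ b ∈ π.part a := by
  refine ⟨fun h a b => h ▸ mem_part_ker.symm, fun h => ext_part fun a => ?_⟩
  ext b
  rw [mem_part_ker, h]

noncomputable def kerEqEquivEmbedding (π : Finpartition (univ : Finset α)) :
    {g : α → β // ker g = π} ≃ (π.parts ↪ β) where
  toFun g := ⟨fun B => g.1 (π.nonempty_of_mem_parts B.2).choose, fun B C hBC => by
    have hC := (π.nonempty_of_mem_parts C.2).choose_spec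
    rw [ker_eq_iff.1 g.2, π.part_eq_of_mem B.2 (π.nonempty_of_mem_parts B.2).choose_spec] at hBC
    exact Subtype.ext (π.eq_of_mem_parts B.2 C.2 hBC hC)⟩
  invFun φ := ⟨fun a => φ ⟨π.part a, π.part_mem.2 (mem_univ a)⟩, ker_eq_iff.2 fun a b => by
    rw [φ.injective.eq_iff, Subtype.mk.injEq, eq_comm,
      π.mem_part_iff_part_eq_part (mem_univ b) (mem_univ a)]⟩
  left_inv g := Subtype.ext <| funext fun a => ((ker_eq_iff.1 g.2 _ _).2
    (π.nonempty_of_mem_parts (π.part_mem.2 (mem_univ a))).choose_spec).symm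
  right_inv φ := DFunLike.ext _ _ fun B =>
    congrArg φ (Subtype.ext (π.part_eq_of_mem B.2 (π.nonempty_of_mem_parts B.2).choose_spec))

lemma card_filter_ker_eq [Fintype β] (π : Finpartition (univ : Finset α)) :
    #{g : α → β | ker g = π} = (Fintype.card β).descFactorial #π.parts := by
  rw [← Fintype.card_subtype, Fintype.card_congr (kerEqEquivEmbedding π), Fintype.card_embedding_eq,
    Fintype.card_coe]

lemma sum_comp_ker [Fintype β] {M : Type*} [AddCommMonoid M]
    (F : Finpartition (univ : Finset α) → M) :
    ∑ g : α → β, F (ker g) = ∑ π, (Fintype.card β).descFactorial #π.parts • F π := by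
  rw [← sum_fiberwise univ ker]
  refine sum_congr rfl fun π _ => ?_
  rw [sum_congr rfl fun g hg => congrArg F (mem_filter.1 hg).2, sum_const, card_filter_ker_eq]

lemma sum_mul_eq_sum_Icc_card_parts [Nonempty α] {R : Type*} [NonUnitalNonAssocSemiring R]
    (f : ℕ → R) (G : Finpartition (univ : Finset α) → R) :
    ∑ π, f #π.parts * G π = ∑ k ∈ Icc 1 (Fintype.card α), f k * ∑ π with #π.parts = k, G π := by
  rw [← sum_fiberwise_of_maps_to fun π _ => π.card_parts_mem_Icc]
  refine sum_congr rfl fun k _ => ?_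
  rw [mul_sum]
  exact sum_congr rfl fun π hπ => by rw [(mem_filter.1 hπ).2]

end Finpartition

lemma MeasureTheory.integrable_pow_of_integrable_abs_pow_s12 {Ω : Type*} [MeasurableSpace Ω]
    {μ : Measure Ω} [IsFiniteMeasure μ] {f : Ω → ℝ} (hf : AEStronglyMeasurable f μ) {r i : ℕ}
    (hri : r ≤ i) (hint : Integrable (fun ω => |f ω| ^ i) μ) : Integrable (fun ω => f ω ^ r) μ := by
  refine (integrable_norm_iff (hf.pow r)).1 ?_
  have := integrable_norm_rpow_of_le hf (Nat.cast_nonneg r) (Nat.cast_nonneg i)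
    (Nat.cast_le.2 hri) (by simpa [Real.rpow_natCast] using hint)
  simpa [Real.rpow_natCast] using this

namespace ProbabilityTheory

variable {Ω ι κ : Type*} [MeasurableSpace Ω] {μ : Measure Ω} [Fintype ι] [Fintype κ]

lemma iIndepFun.integrable_fun_prod_comp {𝓧 : ι → Type*} {m𝓧 : ∀ i, MeasurableSpace (𝓧 i)}
    {𝕜 : Type*} [RCLike 𝕜] {X : (i : ι) → Ω → 𝓧 i} {f : (i : ι) → 𝓧 i → 𝕜}
    (hX : iIndepFun X μ) (mX : ∀ i, AEMeasurable (X i) μ)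
    (hf : ∀ i, Integrable (f i) (μ.map (X i))) :
    Integrable (fun ω => ∏ i, f i (X i ω)) μ := by
  have := hX.isProbabilityMeasure
  have hint : Integrable (fun x : (i : ι) → 𝓧 i => ∏ i, f i (x i)) (μ.map (fun ω i => X i ω)) := by
    rw [hX.map_fun_eq_pi_map mX]
    exact Integrable.fintype_prod_dep hf
  exact (integrable_map_measure hint.aestronglyMeasurable (by fun_prop)).1 hint

lemma iIndepFun.integral_prod_comp_eq_prod_integral_pow [DecidableEq ι] {X : ι → Ω → ℝ}
    (hX : iIndepFun X μ) (mX : ∀ l, AEMeasurable (X l) μ) (g : κ → ι)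
    (hint : ∀ l, Integrable (fun ω => X l ω ^ #{j | g j = l}) μ) :
    Integrable (fun ω => ∏ j, X (g j) ω) μ ∧
      ∫ ω, ∏ j, X (g j) ω ∂μ = ∏ l, ∫ ω, X l ω ^ #{j | g j = l} ∂μ := by
  have hpow : (fun ω => ∏ j, X (g j) ω) = fun ω => ∏ l, X l ω ^ #{j | g j = l} := by
    ext ω
    simp_rw [← prod_fiberwise' univ g (X · ω), prod_const]
  rw [hpow]
  refine ⟨hX.integrable_fun_prod_comp (f := fun l x => x ^ #{j | g j = l}) mX fun l => ?_,
    hX.integral_fun_prod_comp mX fun l => (continuous_pow _).aestronglyMeasurable⟩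
  exact (integrable_map_measure (continuous_pow _).aestronglyMeasurable (mX l)).2 (hint l)

lemma iIndepFun.integral_prod_comp_eq_prod_parts_ker [DecidableEq ι] [DecidableEq κ]
    {X : ι → Ω → ℝ} {Y : Ω → ℝ} (hX : iIndepFun X μ) (hXY : ∀ l, IdentDistrib (X l) Y μ μ)
    (hY : Integrable (fun ω => |Y ω| ^ Fintype.card κ) μ) (g : κ → ι) :
    Integrable (fun ω => ∏ j, X (g j) ω) μ ∧
      ∫ ω, ∏ j, X (g j) ω ∂μ = ∏ B ∈ (Finpartition.ker g).parts, ∫ ω, Y ω ^ #B ∂μ := by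
  have := hX.isProbabilityMeasure
  have hXY_pow (l : ι) (r : ℕ) : IdentDistrib (fun ω => X l ω ^ r) (fun ω => Y ω ^ r) μ μ :=
    (hXY l).comp (measurable_id.pow_const r)
  have hY_pow (l : ι) : Integrable (fun ω => Y ω ^ #{j | g j = l}) μ :=
    integrable_pow_of_integrable_abs_pow_s12 (hXY l).aemeasurable_snd.aestronglyMeasurable
      (card_filter_le _ _) hY
  obtain ⟨hint, heq⟩ := hX.integral_prod_comp_eq_prod_integral_pow
    (fun l => (hXY l).aemeasurable_fst) g fun l => (hXY_pow l _).integrable_iff.2 (hY_pow l)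
  refine ⟨hint, heq.trans ?_⟩
  rw [Finpartition.prod_parts_ker (fun r => ∫ ω, Y ω ^ r ∂μ) (by simp)]
  exact prod_congr rfl fun l _ => (hXY_pow l _).integral_eq

end ProbabilityTheory

theorem moments_of_iid_sum_via_partitions_general
    {Ω : Type*} [MeasurableSpace Ω] (μ : Measure Ω)
    (n i : ℕ) (hn : 0 < n) (hi : 0 < i)
    (X : Fin n → Ω → ℝ)
    (hindep : iIndepFun X μ)
    (hident : ∀ l, IdentDistrib (X l) (X ⟨0, hn⟩) μ μ)
    (hint : Integrable (fun ω => |X ⟨0, hn⟩ ω| ^ i) μ) :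
    (∫ ω, (∑ l : Fin n, X l ω) ^ i ∂μ
        = ∑ π : Finpartition (univ : Finset (Fin i)),
            (n.descFactorial π.parts.card : ℝ) *
              ∏ B ∈ π.parts, ∫ ω, X ⟨0, hn⟩ ω ^ B.card ∂μ) ∧
    (∫ ω, (∑ l : Fin n, X l ω) ^ i ∂μ
        = ∑ k ∈ Finset.Icc 1 i,
            (n.descFactorial k : ℝ) *
              ∑ π ∈ (univ : Finset (Finpartition (univ : Finset (Fin i)))).filter
                  (fun π => π.parts.card = k),
                ∏ B ∈ π.parts, ∫ ω, X ⟨0, hn⟩ ω ^ B.card ∂μ) := by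
  set m : ℕ → ℝ := fun r => ∫ ω, X ⟨0, hn⟩ ω ^ r ∂μ
  have hmoment (g : Fin i → Fin n) := hindep.integral_prod_comp_eq_prod_parts_ker hident
    (by rwa [Fintype.card_fin]) g
  have hpartitions : ∫ ω, (∑ l, X l ω) ^ i ∂μ
      = ∑ π : Finpartition (univ : Finset (Fin i)), (n.descFactorial #π.parts : ℝ) *
          ∏ B ∈ π.parts, m #B := by
    calc ∫ ω, (∑ l, X l ω) ^ i ∂μ = ∫ ω, ∑ g : Fin i → Fin n, ∏ j, X (g j) ω ∂μ := by
          simp_rw [Fintype.sum_pow]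
      _ = ∑ g : Fin i → Fin n, ∏ B ∈ (Finpartition.ker g).parts, m #B := by
          rw [integral_finsetSum _ fun g _ => (hmoment g).1]
          exact sum_congr rfl fun g _ => (hmoment g).2
      _ = _ := by
          rw [Finpartition.sum_comp_ker fun π => ∏ B ∈ π.parts, m #B]
          simp only [Fintype.card_fin, nsmul_eq_mul]
  have : Nonempty (Fin i) := ⟨⟨0, hi⟩⟩
  refine ⟨hpartitions, hpartitions.trans ?_⟩
  simpa only [Fintype.card_fin] using Finpartition.sum_mul_eq_sum_Icc_card_parts (α := Fin i)
    (fun k => (n.descFactorial k : ℝ)) fun π => ∏ B ∈ π.parts, m #B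

/-- For i.i.d. real random variables `X₁,…,Xₙ` with `E[|X₁|^i] < ∞`,
`E[(X₁+⋯+Xₙ)^i] = ∑_{π ∈ Π_i} (n)_{|π|} ∏_{B ∈ π} m_{|B|}`; equivalently
`E[(X₁+⋯+Xₙ)^i] = ∑_{k=1}^i (n)_k B_{i,k}(m₁,…,m_{i−k+1})`, where
`B_{i,k} = ∑_{π ∈ Π_{i,k}} ∏_{B ∈ π} m_{|B|}` is the incomplete exponential Bell polynomial
summed over partitions of `{1,…,i}` into `k` blocks. -/
theorem moments_of_iid_sum_via_partitions
    {Ω : Type*} [MeasurableSpace Ω] (μ : Measure Ω) [IsProbabilityMeasure μ]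
    (n i : ℕ) (hn : 0 < n) (hi : 0 < i)
    (X : Fin n → Ω → ℝ) (hmeas : ∀ l, Measurable (X l))
    (hindep : iIndepFun X μ)
    (hident : ∀ l, IdentDistrib (X l) (X ⟨0, hn⟩) μ μ)
    (hint : Integrable (fun ω => |X ⟨0, hn⟩ ω| ^ i) μ) :
    (∫ ω, (∑ l : Fin n, X l ω) ^ i ∂μ
        = ∑ π : Finpartition (univ : Finset (Fin i)),
            (n.descFactorial π.parts.card : ℝ) *
              ∏ B ∈ π.parts, ∫ ω, X ⟨0, hn⟩ ω ^ B.card ∂μ) ∧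
    (∫ ω, (∑ l : Fin n, X l ω) ^ i ∂μ
        = ∑ k ∈ Finset.Icc 1 i,
            (n.descFactorial k : ℝ) *
              ∑ π ∈ (univ : Finset (Finpartition (univ : Finset (Fin i)))).filter
                  (fun π => π.parts.card = k),
                ∏ B ∈ π.parts, ∫ ω, X ⟨0, hn⟩ ω ^ B.card ∂μ) :=
  moments_of_iid_sum_via_partitions_general μ n i hn hi X hindep hident hint
end
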